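/- arXiv:1801.09884 — 2 statements merged into one kernel-verified Lean document; each statement's English description precedes it below -/
import Mathlib

section
/- Let (X, Y) be an (N+1)-dimensional consistent elliptical random vector, so that the conditional distribution of Y given X = x is elliptical with radius R* whose tail satisfies P(R* U > t) ∝ ∫_t^∞ c_{N+1} g_{N+1}(M(x) + u²) du, where for each d the generator satisfies c_d g_d(t) = λ_d t^{-(d+γ^{-1})/2} (1 + o(1)) as t → ∞ with λ_d > 0 and γ > 0. Then the conditional distribution Y | X = x is regularly varying with tail index (γ^{-1} + N)^{-1}; that is, denoting Φ_{R*}(t) = P(R* U^{(1)} ≤ t), one has lim_{t→∞} (1-Φ_{R*}(ωt))/(1-Φ_{R*}(t)) = ω^{-1/γ - N} for all ω > 0. -/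
/-!
With `β = 1/γ + N`, the density `u ↦ c_{N+1} g_{N+1}(M + u²)` is asymptotically equivalent to
`λ u^{-β-1}`, because `M + u² ~ u²`. Asymptotic equivalence to a power survives integration over
`(t, ∞)`, so the tail is `~ (λ/β) t^{-β}`; the ratio of the tails at `ωt` and `t` is then
asymptotically the ratio of the two powers, namely `ω^{-β}`.
-/

open MeasureTheory Filter Real Asymptotics Set Topology

lemma integral_Ioi_rpow_neg_sub_one {β t : ℝ} (hβ : 0 < β) (ht : 0 < t) :
    ∫ u in Ioi t, u ^ (-β - 1) = t ^ (-β) / β := by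
  rw [integral_Ioi_rpow_of_lt (by linarith) ht, sub_add_cancel, neg_div, div_neg, neg_neg]

lemma isEquivalent_add_sq_rpow (M p : ℝ) :
    (fun u : ℝ ↦ (M + u ^ 2) ^ p) ~[atTop] fun u ↦ u ^ (2 * p) := by
  have hsq : (fun u : ℝ ↦ M + u ^ 2) ~[atTop] fun u ↦ u ^ 2 :=
    IsEquivalent.refl.const_add_of_norm_tendsto_atTop
      (tendsto_norm_atTop_atTop.comp (tendsto_pow_atTop two_ne_zero))
  refine (hsq.rpow (fun u ↦ sq_nonneg u) (r := p)).congr_right ?_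
  filter_upwards [eventually_ge_atTop 0] with u hu
  rw [Pi.pow_apply, ← rpow_natCast, ← rpow_mul hu]
  norm_num

namespace Asymptotics

lemma IsLittleO.integral_Ioi_rpow {E : Type*} [NormedAddCommGroup E] [NormedSpace ℝ E]
    {f : ℝ → E} {β : ℝ} (hβ : 0 < β) (hf : f =o[atTop] fun u ↦ u ^ (-β - 1)) :
    (fun t ↦ ∫ u in Ioi t, f u) =o[atTop] fun t ↦ t ^ (-β) := by
  refine IsLittleO.of_bound fun c hc ↦ ?_
  obtain ⟨T, hT⟩ := eventually_atTop.mp ((hf.bound (mul_pos hc hβ)).and (eventually_gt_atTop 0))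
  filter_upwards [eventually_ge_atTop T, eventually_gt_atTop 0] with t hTt ht
  have hbound : ∀ᵐ u ∂volume.restrict (Ioi t), ‖f u‖ ≤ c * β * u ^ (-β - 1) := by
    filter_upwards [ae_restrict_mem measurableSet_Ioi] with u hu
    obtain ⟨hfu, hu⟩ := hT u (hTt.trans (le_of_lt hu))
    rwa [norm_of_nonneg (rpow_nonneg hu.le _)] at hfu
  calc ‖∫ u in Ioi t, f u‖
      ≤ ∫ u in Ioi t, c * β * u ^ (-β - 1) :=
        norm_integral_le_of_norm_le
          ((integrableOn_Ioi_rpow_of_lt (by linarith) ht).const_mul _) hbound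
    _ = c * ‖t ^ (-β)‖ := by
        rw [integral_const_mul, integral_Ioi_rpow_neg_sub_one hβ ht,
          norm_of_nonneg (rpow_nonneg ht.le _)]
        field_simp

lemma IsEquivalent.integral_Ioi_rpow {f : ℝ → ℝ} {β c : ℝ} (hβ : 0 < β) (hc : c ≠ 0)
    (hf : f ~[atTop] fun u ↦ c * u ^ (-β - 1)) (hfm : StronglyMeasurableAtFilter f atTop) :
    (fun t ↦ ∫ u in Ioi t, f u) ~[atTop] fun t ↦ c / β * t ^ (-β) := by
  have hint : IntegrableAtFilter f atTop :=
    (hf.isBigO.trans (isBigO_const_mul_self c _ _)).integrableAtFilter hfm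
      (integrableAtFilter_rpow_atTop_iff.mpr (by linarith))
  obtain ⟨a, ha⟩ := integrableAtFilter_atTop_iff.mp hint
  have hsmall : (f - fun u ↦ c * u ^ (-β - 1)) =o[atTop] fun u ↦ u ^ (-β - 1) :=
    hf.isLittleO.trans_isBigO (isBigO_const_mul_self c _ _)
  refine IsLittleO.isEquivalent ?_
  refine ((hsmall.integral_Ioi_rpow hβ).congr' ?_ .rfl).trans_isBigO
    (isBigO_self_const_mul (div_ne_zero hc hβ.ne') _ _)
  filter_upwards [eventually_ge_atTop a, eventually_gt_atTop 0] with t hat ht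
  simp only [Pi.sub_apply]
  rw [integral_sub (ha.mono_set (Ioi_subset_Ici hat))
      ((integrableOn_Ioi_rpow_of_lt (by linarith) ht).const_mul c),
    integral_const_mul, integral_Ioi_rpow_neg_sub_one hβ ht]
  ring

lemma IsEquivalent.tendsto_comp_const_mul_div {F : ℝ → ℝ} {C β : ℝ} (hC : C ≠ 0)
    (hF : F ~[atTop] fun t ↦ C * t ^ (-β)) {ω : ℝ} (hω : 0 < ω) :
    Tendsto (fun t ↦ F (ω * t) / F t) atTop (𝓝 (ω ^ (-β))) := by
  have hratio := (hF.comp_tendsto (tendsto_id.const_mul_atTop hω)).div hF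
  refine hratio.symm.tendsto_nhds (tendsto_const_nhds.congr' ?_)
  filter_upwards [eventually_gt_atTop 0] with t ht
  simp only [Function.comp_apply, Pi.div_apply, id_eq, mul_rpow hω.le ht.le]
  field_simp

end Asymptotics

theorem conditional_tail_index_general
    (N : ℕ) (γ M K lam : ℝ)
    (hγ : 0 < γ) (hK : 0 < K) (hlam : 0 < lam)
    (h : ℝ → ℝ) (hmeas : Measurable h)
    (hasymp : Tendsto
      (fun t : ℝ => h t / (lam * t ^ (-(((N : ℝ) + 1 + 1 / γ) / 2))))
      atTop (nhds 1)) :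
    ∀ ω : ℝ, 0 < ω →
      Tendsto (fun t : ℝ =>
          (K * ∫ u in Set.Ioi (ω * t), h (M + u ^ 2)) /
          (K * ∫ u in Set.Ioi t, h (M + u ^ 2)))
        atTop (nhds (ω ^ (-(1 / γ) - (N : ℝ)))) := by
  intro ω hω
  set β : ℝ := 1 / γ + N with hβ_def
  have hβ : 0 < β := by positivity
  have hgenerator : h ~[atTop] fun t ↦ lam * t ^ (-(((N : ℝ) + 1 + 1 / γ) / 2)) :=
    isEquivalent_of_tendsto_one hasymp
  have hdensity : (fun u ↦ h (M + u ^ 2)) ~[atTop] fun u ↦ lam * u ^ (-β - 1) := by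
    have hshift : Tendsto (fun u : ℝ ↦ M + u ^ 2) atTop atTop :=
      tendsto_atTop_add_const_left _ M (tendsto_pow_atTop two_ne_zero)
    refine ((hgenerator.comp_tendsto hshift).trans
      (IsEquivalent.refl.mul (isEquivalent_add_sq_rpow M _))).congr_right
      (.of_forall fun u ↦ ?_)
    rw [Pi.mul_apply, hβ_def]
    ring_nf
  have htail := hdensity.integral_Ioi_rpow hβ hlam.ne'
    (hmeas.comp (by fun_prop)).stronglyMeasurable.stronglyMeasurableAtFilter
  simp_rw [mul_div_mul_left _ _ hK.ne', show -(1 / γ) - (N : ℝ) = -β by ring]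
  exact htail.tendsto_comp_const_mul_div (div_ne_zero hlam.ne' hβ.ne') hω

/-- If the conditional survival function is
`P(R* U > t) = K ∫_t^∞ c_{N+1} g_{N+1}(M(x) + u²) du` with
`c_{N+1} g_{N+1}(t) = λ t^{-(N+1+γ⁻¹)/2}(1+o(1))`, then the conditional distribution is
regularly varying with tail index `(γ⁻¹+N)⁻¹`:
`lim_{t→∞} (1-Φ_{R*}(ωt))/(1-Φ_{R*}(t)) = ω^{-1/γ-N}` for all `ω > 0`. -/
theorem conditional_tail_index
    (N : ℕ) (hN : 1 ≤ N) (γ M K lam : ℝ)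
    (hγ : 0 < γ) (hM : 0 < M) (hK : 0 < K) (hlam : 0 < lam)
    (h : ℝ → ℝ) (hmeas : Measurable h) (hpos : ∀ t, 0 ≤ h t)
    (hasymp : Tendsto
      (fun t : ℝ => h t / (lam * t ^ (-(((N : ℝ) + 1 + 1 / γ) / 2))))
      atTop (nhds 1)) :
    ∀ ω : ℝ, 0 < ω →
      Tendsto (fun t : ℝ =>
          (K * ∫ u in Set.Ioi (ω * t), h (M + u ^ 2)) /
          (K * ∫ u in Set.Ioi t, h (M + u ^ 2)))
        atTop (nhds (ω ^ (-(1 / γ) - (N : ℝ)))) :=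
  conditional_tail_index_general N γ M K lam hγ hK hlam h hmeas hasymp
end

section
/- Suppose for each d the elliptical generator satisfies the second-order expansion c_d g_d(t) = λ₁ t^{-(d+γ^{-1})/2} [1 + λ₂ t^{ρ/(2γ)} + o(t^{ρ/(2γ)})] as t → ∞, with λ₁ > 0, λ₂ ∈ ℝ, γ > 0, ρ < 0. Then the conditional quantile function admits the second-order expansion Φ_{R*}^{-1}(1 - 1/t) = c₁ t^{γ/(γN+1)} [1 + c₂ t^{-min(-ρ, 2γ)/(γN+1)} + o(t^{-min(-ρ,2γ)/(γN+1)})] as t → ∞, for some constants c₁ > 0, c₂ ∈ ℝ. -/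
/-!
Put `F u = G (M + u²)`, `p = N + 1 + 1/γ` and `δ = min (-ρ/γ) 2`. The expansion of `G` transfers to
`F u = λ₁ u^(-p) (1 + O(u^(-δ)))`: the factor `(1 + M/u²)^(-p/2)` relating `(M + u²)^(-p/2)` to
`u^(-p)` contributes the competing `u^(-2)` term. Integrating over `(x, ∞)` keeps the shape,
`∫_x^∞ F = λ₁ x^(1-p)/(p-1) (1 + O(x^(-δ)))`, and this tail equals `C/t` at `x = Q t`, so
`Q(t)^(p-1) = K t (1 + O(Q(t)^(-δ)))`. Taking `(p-1)`-th roots, and measuring the error in powers of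
`t` instead of `Q t`, gives the claim with `c₁ = K^(1/(p-1))`.
-/

open MeasureTheory Filter Real Set Topology

theorem integral_Ioi_rpow_neg {p x : ℝ} (hp : 1 < p) (hx : 0 < x) :
    ∫ u in Ioi x, u ^ (-p) = x ^ (1 - p) / (p - 1) := by
  rw [integral_Ioi_rpow_of_lt (by linarith) hx, neg_add_eq_sub, neg_div, ← div_neg, neg_sub]

theorem integrableOn_Ioi_and_abs_integral_le {g : ℝ → ℝ} (hg : Measurable g) {p x ε : ℝ}
    (hp : 1 < p) (hx : 0 < x) (hb : ∀ u ∈ Ioi x, |g u| ≤ ε * u ^ (-p)) :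
    IntegrableOn g (Ioi x) ∧ |∫ u in Ioi x, g u| ≤ ε * (x ^ (1 - p) / (p - 1)) := by
  have hpow : IntegrableOn (fun u : ℝ => ε * u ^ (-p)) (Ioi x) :=
    (integrableOn_Ioi_rpow_of_lt (by linarith) hx).const_mul ε
  have hb' : ∀ᵐ u ∂volume.restrict (Ioi x), ‖g u‖ ≤ ε * u ^ (-p) :=
    (ae_restrict_iff' measurableSet_Ioi).2 (ae_of_all _ hb)
  refine ⟨hpow.mono' hg.aestronglyMeasurable hb', ?_⟩
  calc |∫ u in Ioi x, g u| ≤ ∫ u in Ioi x, ε * u ^ (-p) := norm_integral_le_of_norm_le hpow hb'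
    _ = ε * (x ^ (1 - p) / (p - 1)) := by rw [integral_const_mul, integral_Ioi_rpow_neg hp hx]

theorem tendsto_integral_Ioi_mul_rpow_of_tendsto_zero {g : ℝ → ℝ} (hg : Measurable g) {p : ℝ}
    (hp : 1 < p) (h : Tendsto (fun u => g u * u ^ p) atTop (𝓝 0)) :
    (∀ᶠ x in atTop, IntegrableOn g (Ioi x)) ∧
      Tendsto (fun x => (∫ u in Ioi x, g u) * x ^ (p - 1)) atTop (𝓝 0) := by
  have hbound : ∀ ε > 0, ∀ᶠ x in atTop, 0 < x ∧ ∀ u ∈ Ioi x, |g u| ≤ ε * u ^ (-p) := by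
    intro ε hε
    have hsmall := eventually_forall_ge_atTop.2
      ((h.eventually (Metric.closedBall_mem_nhds 0 hε)).and (eventually_gt_atTop 0))
    filter_upwards [hsmall, eventually_gt_atTop 0] with x hx hx0
    refine ⟨hx0, fun u hu => ?_⟩
    obtain ⟨hgu, hu0⟩ := hx u hu.le
    rw [dist_zero_right, norm_mul, norm_eq_abs, norm_eq_abs,
      abs_of_pos (rpow_pos_of_pos hu0 p), ← le_div_iff₀ (rpow_pos_of_pos hu0 p)] at hgu
    rwa [rpow_neg hu0.le, ← div_eq_mul_inv]
  refine ⟨(hbound 1 one_pos).mono fun x hx =>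
    (integrableOn_Ioi_and_abs_integral_le hg hp hx.1 hx.2).1, ?_⟩
  rw [Metric.tendsto_nhds]
  intro ε hε
  have hp1 : 0 < p - 1 := by linarith
  filter_upwards [hbound (ε * (p - 1) / 2) (by positivity)] with x ⟨hx0, hx⟩
  have hxp : x ^ (1 - p) * x ^ (p - 1) = 1 := by rw [← rpow_add hx0]; simp
  calc dist ((∫ u in Ioi x, g u) * x ^ (p - 1)) 0
      = |∫ u in Ioi x, g u| * x ^ (p - 1) := by
        rw [dist_zero_right, norm_mul, norm_eq_abs, norm_eq_abs,
          abs_of_pos (rpow_pos_of_pos hx0 _)]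
    _ ≤ ε * (p - 1) / 2 * (x ^ (1 - p) / (p - 1)) * x ^ (p - 1) := by
        gcongr
        exact (integrableOn_Ioi_and_abs_integral_le hg hp hx0 hx).2
    _ = ε / 2 := by field_simp; exact hxp
    _ < ε := half_lt_self hε

theorem integrableOn_Ioi_and_integral_eq_of_sub_rpow_neg {f : ℝ → ℝ} {p x : ℝ} (L : ℝ) (hp : 1 < p) (hx : 0 < x)
    (hf : IntegrableOn (fun u => f u - L * u ^ (-p)) (Ioi x)) :
    IntegrableOn f (Ioi x) ∧
      ∫ u in Ioi x, f u = (∫ u in Ioi x, f u - L * u ^ (-p)) + L * (x ^ (1 - p) / (p - 1)) := by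
  have hpow := (integrableOn_Ioi_rpow_of_lt (by linarith : -p < -1) hx).const_mul L
  refine ⟨(hf.add hpow).congr_fun (fun u _ => sub_add_cancel _ _) measurableSet_Ioi, ?_⟩
  rw [integral_sub ?_ hpow, integral_const_mul, integral_Ioi_rpow_neg hp hx, sub_add_cancel]
  exact (hf.add hpow).congr_fun (fun u _ => sub_add_cancel _ _) measurableSet_Ioi

theorem tendsto_integral_Ioi_mul_rpow {f : ℝ → ℝ} (hf : Measurable f) {p L : ℝ} (hp : 1 < p)
    (h : Tendsto (fun u => f u * u ^ p) atTop (𝓝 L)) :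
    (∀ᶠ x in atTop, IntegrableOn f (Ioi x)) ∧
      Tendsto (fun x => (∫ u in Ioi x, f u) * x ^ (p - 1)) atTop (𝓝 (L / (p - 1))) := by
  have hg0 : Tendsto (fun u => (f u - L * u ^ (-p)) * u ^ p) atTop (𝓝 0) := by
    refine (tendsto_sub_nhds_zero_iff.2 h).congr' ?_
    filter_upwards [eventually_gt_atTop 0] with u hu
    rw [sub_mul, mul_assoc, ← rpow_add hu, neg_add_cancel, rpow_zero, mul_one]
  obtain ⟨hint, hlim⟩ := tendsto_integral_Ioi_mul_rpow_of_tendsto_zero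
    (hf.sub (measurable_const.mul (by fun_prop))) hp hg0
  have hsplit := hint.and (eventually_gt_atTop 0) |>.mono fun x hx =>
    integrableOn_Ioi_and_integral_eq_of_sub_rpow_neg L hp hx.2 hx.1
  refine ⟨hsplit.mono fun x hx => hx.1, ?_⟩
  have hlim' : Tendsto (fun x => (∫ u in Ioi x, f u - L * u ^ (-p)) * x ^ (p - 1) + L / (p - 1))
      atTop (𝓝 (L / (p - 1))) := by simpa using hlim.add_const (L / (p - 1))
  refine hlim'.congr' ?_
  filter_upwards [hsplit, eventually_gt_atTop 0] with x hx hx0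
  have hxp : x ^ (1 - p) * x ^ (p - 1) = 1 := by rw [← rpow_add hx0]; simp
  rw [hx.2, add_mul, mul_assoc L, div_mul_eq_mul_div, hxp, mul_one_div]

/-- `f t = 1 + c / g t + o(1 / g t)` as `t → ∞`, for some constant `c`. -/
def TendstoOneAtRate (f g : ℝ → ℝ) : Prop :=
  ∃ c, Tendsto (fun t => (f t - 1) * g t) atTop (𝓝 c)

theorem tendstoOneAtRate_one_add_div_sq (M : ℝ) :
    TendstoOneAtRate (fun u => 1 + M / u ^ 2) (fun u => u ^ (2 : ℝ)) := by
  refine ⟨M, tendsto_const_nhds.congr' ?_⟩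
  filter_upwards [eventually_gt_atTop 0] with u hu
  rw [rpow_two]
  field_simp
  ring

namespace TendstoOneAtRate

variable {f f' g g' : ℝ → ℝ}

theorem congr' (h : TendstoOneAtRate f g) (hf : f =ᶠ[atTop] f') : TendstoOneAtRate f' g :=
  let ⟨c, hc⟩ := h
  ⟨c, hc.congr' (hf.mono fun t ht => by rw [ht])⟩

theorem comp (h : TendstoOneAtRate f g) {φ : ℝ → ℝ} (hφ : Tendsto φ atTop atTop) :
    TendstoOneAtRate (fun t => f (φ t)) (fun t => g (φ t)) :=
  let ⟨c, hc⟩ := h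
  ⟨c, hc.comp hφ⟩

theorem of_tendsto_div (h : TendstoOneAtRate f g) {L : ℝ}
    (hL : Tendsto (fun t => g' t / g t) atTop (𝓝 L)) (hg : ∀ᶠ t in atTop, g t ≠ 0) :
    TendstoOneAtRate f g' :=
  let ⟨c, hc⟩ := h
  ⟨c * L, (hc.mul hL).congr' (hg.mono fun t ht => by field_simp)⟩

theorem tendsto_one (h : TendstoOneAtRate f g) (hg : Tendsto g atTop atTop) :
    Tendsto f atTop (𝓝 1) := by
  obtain ⟨c, hc⟩ := h
  rw [← tendsto_sub_nhds_zero_iff]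
  simpa using (hc.mul hg.inv_tendsto_atTop).congr'
    ((hg.eventually_ne_atTop 0).mono fun t ht => by simp only [Pi.inv_apply]; field_simp)

theorem mul (h : TendstoOneAtRate f g) (h' : TendstoOneAtRate f' g)
    (hg : Tendsto g atTop atTop) : TendstoOneAtRate (fun t => f t * f' t) g := by
  obtain ⟨c, hc⟩ := h
  have hf' := h'.tendsto_one hg
  obtain ⟨c', hc'⟩ := h'
  exact ⟨c * 1 + c', ((hc.mul hf').add hc').congr fun t => by ring⟩

theorem rpow (h : TendstoOneAtRate f g) (hg : Tendsto g atTop atTop) (m : ℝ) :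
    TendstoOneAtRate (fun t => f t ^ m) g := by
  have hderiv : HasDerivAt (fun x : ℝ => x ^ m) m 1 := by
    simpa using Real.hasDerivAt_rpow_const (p := m) (Or.inl one_ne_zero)
  have hslope : Tendsto (dslope (fun x : ℝ => x ^ m) 1 ∘ f) atTop (𝓝 m) := by
    simpa [dslope_same, hderiv.deriv] using
      (continuousAt_dslope_same.2 hderiv.differentiableAt).tendsto.comp (h.tendsto_one hg)
  obtain ⟨c, hc⟩ := h
  refine ⟨m * c, (hslope.mul hc).congr fun t => ?_⟩
  have := sub_smul_dslope (fun x : ℝ => x ^ m) 1 (f t)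
  simp only [smul_eq_mul, one_rpow] at this
  rw [Function.comp_apply, ← this]
  ring

theorem mono_rpow {r δ : ℝ} (h : TendstoOneAtRate f (fun t => t ^ r)) (hδ : δ ≤ r) :
    TendstoOneAtRate f (fun t => t ^ δ) := by
  obtain ⟨L, hL⟩ : ∃ L, Tendsto (fun t : ℝ => t ^ (δ - r)) atTop (𝓝 L) := by
    rcases (sub_nonpos.2 hδ).lt_or_eq with hlt | heq
    · exact ⟨0, by simpa using tendsto_rpow_neg_atTop (neg_pos.2 hlt)⟩
    · exact ⟨1, by simp [heq]⟩
  refine h.of_tendsto_div (hL.congr' ?_) ?_ <;> filter_upwards [eventually_gt_atTop 0] with t ht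
  · rw [rpow_sub ht]
  · exact (rpow_pos_of_pos ht r).ne'

theorem integral_Ioi {f : ℝ → ℝ} (hf : Measurable f) {p δ lam : ℝ}
    (hp : 1 < p) (hδ : 0 < δ) (hlam : lam ≠ 0)
    (h : TendstoOneAtRate (fun u => f u / (lam * u ^ (-p))) (fun u => u ^ δ)) :
    TendstoOneAtRate (fun x => (∫ u in Ioi x, f u) / (lam * (x ^ (1 - p) / (p - 1))))
      (fun x => x ^ δ) := by
  obtain ⟨c, hc⟩ := h
  have hrem : Tendsto (fun u => (f u - lam * u ^ (-p)) * u ^ (p + δ)) atTop (𝓝 (lam * c)) := by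
    refine (hc.const_mul lam).congr' ?_
    filter_upwards [eventually_gt_atTop 0] with u hu
    have := (rpow_pos_of_pos hu p).ne'
    rw [rpow_add hu, rpow_neg hu.le]
    field_simp
  obtain ⟨hint, hlim⟩ := tendsto_integral_Ioi_mul_rpow (f := fun u => f u - lam * u ^ (-p))
    (hf.sub (measurable_const.mul (by fun_prop))) (by linarith) hrem
  refine ⟨(p - 1) / lam * (lam * c / (p + δ - 1)), (hlim.const_mul ((p - 1) / lam)).congr' ?_⟩
  filter_upwards [hint, eventually_gt_atTop 0] with x hx hx0
  have := (rpow_pos_of_pos hx0 (p - 1)).ne'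
  have hp1 : p - 1 ≠ 0 := by linarith
  rw [(integrableOn_Ioi_and_integral_eq_of_sub_rpow_neg lam hp hx0 hx).2, show p + δ - 1 = (p - 1) + δ by ring,
    rpow_add hx0, show 1 - p = -(p - 1) by ring, rpow_neg hx0.le]
  field_simp
  ring

theorem comp_add_sq {G : ℝ → ℝ} {lam p r : ℝ} (M : ℝ) (hr : 0 < r)
    (h : TendstoOneAtRate (fun s => G s / (lam * s ^ (-(p / 2)))) (fun s => s ^ (r / 2))) :
    TendstoOneAtRate (fun u => G (M + u ^ 2) / (lam * u ^ (-p))) (fun u => u ^ min r 2) := by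
  have hs : Tendsto (fun u : ℝ => M + u ^ 2) atTop atTop :=
    tendsto_atTop_add_const_left _ M (tendsto_pow_atTop two_ne_zero)
  have hfactor : ∀ᶠ u : ℝ in atTop, 0 < 1 + M / u ^ 2 ∧
      ∀ e : ℝ, (M + u ^ 2) ^ e = u ^ (2 * e) * (1 + M / u ^ 2) ^ e := by
    filter_upwards [eventually_gt_atTop 0, hs.eventually_gt_atTop 0] with u hu hs0
    have hsplit : M + u ^ 2 = u ^ (2 : ℝ) * (1 + M / u ^ 2) := by rw [rpow_two]; field_simp; ring
    have hpos : 0 < 1 + M / u ^ 2 := by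
      rw [one_add_div (by positivity), add_comm]; exact div_pos hs0 (by positivity)
    refine ⟨hpos, fun e => ?_⟩
    rw [hsplit, mul_rpow (by positivity) hpos.le, ← rpow_mul hu.le]
  have hcorr : TendstoOneAtRate (fun u => (1 + M / u ^ 2) ^ (-(p / 2))) (fun u => u ^ (2 : ℝ)) :=
    (tendstoOneAtRate_one_add_div_sq M).rpow (tendsto_rpow_atTop two_pos) (-(p / 2))
  have hgen : TendstoOneAtRate (fun u => G (M + u ^ 2) / (lam * (M + u ^ 2) ^ (-(p / 2))))
      (fun u => u ^ r) := by
    have hone : Tendsto (fun u => ((1 + M / u ^ 2) ^ (r / 2))⁻¹) atTop (𝓝 1) := by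
      simpa using (((tendstoOneAtRate_one_add_div_sq M).tendsto_one
        (tendsto_rpow_atTop two_pos)).rpow_const (Or.inl one_ne_zero) (p := r / 2)).inv₀
          (by simp)
    refine (h.comp hs).of_tendsto_div (hone.congr' ?_) ?_ <;>
      filter_upwards [hfactor, hs.eventually_gt_atTop 0, eventually_gt_atTop 0]
        with u ⟨hpos, hpow⟩ hs0 hu
    · have := (rpow_pos_of_pos hpos (r / 2)).ne'
      have := (rpow_pos_of_pos hu r).ne'
      rw [hpow, mul_div_cancel₀ r two_ne_zero]
      field_simp
    · exact (rpow_pos_of_pos hs0 _).ne'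
  refine ((hcorr.mono_rpow (min_le_right _ _)).mul (hgen.mono_rpow (min_le_left _ _))
    (tendsto_rpow_atTop (lt_min hr two_pos))).congr' ?_
  filter_upwards [hfactor] with u ⟨hpos, hpow⟩
  have := (rpow_pos_of_pos hpos (-(p / 2))).ne'
  rw [hpow, mul_neg, mul_div_cancel₀ p two_ne_zero]
  field_simp

theorem div_rpow_of_rpow_div {Q : ℝ → ℝ} {p K δ : ℝ} (hp : 0 < p) (hK : 0 < K)
    (hδ : 0 < δ) (hQ : Tendsto Q atTop atTop)
    (h : TendstoOneAtRate (fun t => Q t ^ p / (K * t)) (fun t => Q t ^ δ)) :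
    TendstoOneAtRate (fun t => Q t / (K ^ p⁻¹ * t ^ p⁻¹)) (fun t => t ^ (δ / p)) := by
  have hQδ : Tendsto (fun t => Q t ^ δ) atTop atTop := (tendsto_rpow_atTop hδ).comp hQ
  have hR : Tendsto (fun t => Q t ^ p / (K * t)) atTop (𝓝 1) := h.tendsto_one hQδ
  have hpos : ∀ᶠ t in atTop, 0 < t ∧ 0 < Q t :=
    (eventually_gt_atTop 0).and (hQ.eventually_gt_atTop 0)
  have hratio : Tendsto (fun t => t ^ (δ / p) / Q t ^ δ) atTop (𝓝 (K ^ (δ / p))⁻¹) := by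
    have hlim := ((hR.rpow_const (Or.inl one_ne_zero) (p := δ / p)).mul_const (K ^ (δ / p))).inv₀
      (by simpa using (rpow_pos_of_pos hK _).ne')
    rw [one_rpow, one_mul] at hlim
    refine hlim.congr' ?_
    filter_upwards [hpos] with t ⟨ht, hQt⟩
    have hQδ : Q t ^ δ = (Q t ^ p / (K * t)) ^ (δ / p) * K ^ (δ / p) * t ^ (δ / p) := by
      rw [div_rpow (by positivity) (by positivity), mul_rpow hK.le ht.le, ← rpow_mul hQt.le,
        mul_div_cancel₀ δ hp.ne']
      have := (rpow_pos_of_pos hK (δ / p)).ne'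
      have := (rpow_pos_of_pos ht (δ / p)).ne'
      field_simp
    have := (rpow_pos_of_pos ht (δ / p)).ne'
    rw [hQδ]
    field_simp
  have hrate := (h.of_tendsto_div hratio (hpos.mono fun t ht => (rpow_pos_of_pos ht.2 δ).ne')).rpow
    (tendsto_rpow_atTop (div_pos hδ hp)) p⁻¹
  refine hrate.congr' ?_
  filter_upwards [hpos] with t ⟨ht, hQt⟩
  rw [div_rpow (by positivity) (by positivity), mul_rpow hK.le ht.le,
    rpow_rpow_inv hQt.le hp.ne']

end TendstoOneAtRate

theorem conditional_quantile_second_order_general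
    (N : ℕ) (γ ρ M C : ℝ)
    (hγ : 0 < γ) (hρ : ρ < 0) (hC : 0 < C)
    (lam1 lam2 : ℝ) (hlam1 : 0 < lam1)
    (G : ℝ → ℝ) (hmG : Measurable G)
    (hG : Tendsto (fun t : ℝ =>
        (G t / (lam1 * t ^ (-(((N : ℝ) + 1 + 1 / γ) / 2))) - 1) / t ^ (ρ / (2 * γ)))
      atTop (nhds lam2))
    (Q : ℝ → ℝ) (hQtop : Tendsto Q atTop atTop)
    (hQ : ∀ᶠ t in atTop, (∫ u in Set.Ioi (Q t), G (M + u ^ 2)) / C = 1 / t) :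
    ∃ c₁ : ℝ, 0 < c₁ ∧ ∃ c₂ : ℝ,
      Tendsto (fun t : ℝ =>
          (Q t / (c₁ * t ^ (γ / (γ * (N : ℝ) + 1))) - 1) *
            t ^ (min (-ρ) (2 * γ) / (γ * (N : ℝ) + 1)))
        atTop (nhds c₂) := by
  set p : ℝ := (N : ℝ) + 1 + 1 / γ
  have hp : 1 < p := by linarith [one_div_pos.2 hγ, (N.cast_nonneg : (0 : ℝ) ≤ N)]
  set δ : ℝ := min (-ρ / γ) 2
  have hδ : 0 < δ := lt_min (div_pos (neg_pos.2 hρ) hγ) two_pos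
  have hgen : TendstoOneAtRate (fun s => G s / (lam1 * s ^ (-(p / 2))))
      (fun s => s ^ ((-ρ / γ) / 2)) := by
    refine ⟨lam2, hG.congr' ((eventually_gt_atTop 0).mono fun s hs => ?_)⟩
    beta_reduce
    rw [show -ρ / γ / 2 = -(ρ / (2 * γ)) by ring, rpow_neg hs.le (ρ / (2 * γ)), ← div_eq_mul_inv]
  have htail := (hgen.comp_add_sq M (div_pos (neg_pos.2 hρ) hγ)).integral_Ioi
    (by fun_prop) hp hδ hlam1.ne'
  set K : ℝ := lam1 / ((p - 1) * C)
  have hK : 0 < K := div_pos hlam1 (mul_pos (by linarith) hC)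
  have hquantile : TendstoOneAtRate (fun t => Q t ^ (p - 1) / (K * t)) (fun t => Q t ^ δ) := by
    refine (htail.comp hQtop).congr' ?_
    filter_upwards [hQ, eventually_gt_atTop 0, hQtop.eventually_gt_atTop 0] with t hQt ht hQt0
    rw [div_eq_iff hC.ne'] at hQt
    have := (rpow_pos_of_pos hQt0 (p - 1)).ne'
    have hp1 : p - 1 ≠ 0 := by linarith
    rw [hQt, show 1 - p = -(p - 1) by ring, rpow_neg hQt0.le]
    simp only [K]
    field_simp
  obtain ⟨c, hc⟩ := hquantile.div_rpow_of_rpow_div (sub_pos.2 hp) hK hδ hQtop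
  refine ⟨K ^ (p - 1)⁻¹, rpow_pos_of_pos hK _, c, ?_⟩
  have hq : p - 1 = (γ * N + 1) / γ := by simp only [p]; field_simp; ring
  have hmin : min (-ρ) (2 * γ) = δ * γ := by
    rw [min_mul_of_nonneg _ _ hγ.le, div_mul_cancel₀ _ hγ.ne']
  rwa [hmin, ← div_div_eq_mul_div, ← hq, ← inv_div, ← hq]

/-- If the generator satisfies the second-order expansion
`c_{N+1} g_{N+1}(t) = λ₁ t^{-(N+1+γ⁻¹)/2}[1 + λ₂ t^{ρ/(2γ)} + o(t^{ρ/(2γ)})]`, then the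
conditional quantile function `Q(t) = Φ_{R*}⁻¹(1-1/t)` admits the second-order expansion
`Q(t) = c₁ t^{γ/(γN+1)}[1 + c₂ t^{-min(-ρ,2γ)/(γN+1)} + o(t^{-min(-ρ,2γ)/(γN+1)})]`
for some `c₁ > 0`, `c₂ ∈ ℝ`. -/
theorem conditional_quantile_second_order
    (N : ℕ) (hN : 1 ≤ N) (γ ρ M C : ℝ)
    (hγ : 0 < γ) (hρ : ρ < 0) (hM : 0 < M) (hC : 0 < C)
    (lam1 lam2 : ℝ) (hlam1 : 0 < lam1)
    (G : ℝ → ℝ) (hmG : Measurable G) (hG0 : ∀ t, 0 ≤ G t)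
    (hG : Tendsto (fun t : ℝ =>
        (G t / (lam1 * t ^ (-(((N : ℝ) + 1 + 1 / γ) / 2))) - 1) / t ^ (ρ / (2 * γ)))
      atTop (nhds lam2))
    (Q : ℝ → ℝ) (hQtop : Tendsto Q atTop atTop)
    (hQ : ∀ᶠ t in atTop, (∫ u in Set.Ioi (Q t), G (M + u ^ 2)) / C = 1 / t) :
    ∃ c₁ : ℝ, 0 < c₁ ∧ ∃ c₂ : ℝ,
      Tendsto (fun t : ℝ =>
          (Q t / (c₁ * t ^ (γ / (γ * (N : ℝ) + 1))) - 1) *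
            t ^ (min (-ρ) (2 * γ) / (γ * (N : ℝ) + 1)))
        atTop (nhds c₂) :=
  conditional_quantile_second_order_general N γ ρ M C hγ hρ hC lam1 lam2 hlam1 G hmG hG Q hQtop hQ
end
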